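/- arXiv:2507.14410 — 2 statements merged into one kernel-verified Lean document; each statement's English description precedes it below -/
import Mathlib

section
/- For all n ≥ 1, the relative gap satisfies (θ_{n+1} - θ_n)/θ_n > (9/10)/n, where θ_n = ∑_{i=1}^n ln(p_i). -/
/-! Each of the `n` terms of `θ n` is at most `log p (n+1)`, which is exactly `θ (n+1) - θ n`;
so the relative gap is at least `1/n`, and `1/n > (9/10)/n`. -/

noncomputable def p (n : ℕ) : ℕ := Nat.nth Nat.Prime (n - 1)

noncomputable def θ (n : ℕ) : ℝ := ∑ i ∈ Finset.Icc 1 n, Real.log (p i)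

lemma p_prime (i : ℕ) : (p i).Prime := Nat.prime_nth_prime (i - 1)

lemma p_monotone : Monotone p :=
  fun _ _ hij => Nat.nth_monotone Nat.infinite_setOfPred_prime (Nat.sub_le_sub_right hij 1)

lemma log_p_pos (i : ℕ) : 0 < Real.log (p i) :=
  Real.log_pos (by exact_mod_cast (p_prime i).one_lt)

lemma θ_succ_sub_θ (n : ℕ) : θ (n + 1) - θ n = Real.log (p (n + 1)) := by
  rw [θ, θ, Finset.sum_Icc_succ_top (by omega : 1 ≤ n + 1), add_sub_cancel_left]

lemma θ_pos {n : ℕ} (hn : 1 ≤ n) : 0 < θ n :=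
  Finset.sum_pos (fun i _ => log_p_pos i) ⟨1, Finset.mem_Icc.mpr ⟨le_rfl, hn⟩⟩

lemma θ_le_mul_log_p_succ (n : ℕ) : θ n ≤ n * Real.log (p (n + 1)) := by
  have hterm : ∀ i ∈ Finset.Icc 1 n, Real.log (p i) ≤ Real.log (p (n + 1)) := by
    intro i hi
    have hpi : p i ≤ p (n + 1) := p_monotone ((Finset.mem_Icc.mp hi).2.trans n.le_succ)
    exact Real.log_le_log (by exact_mod_cast (p_prime i).pos) (by exact_mod_cast hpi)
  simpa [θ, Nat.card_Icc, nsmul_eq_mul] using Finset.sum_le_card_nsmul _ _ _ hterm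

lemma inv_le_θ_succ_sub_θ_div_θ {n : ℕ} (hn : 1 ≤ n) :
    1 / (n : ℝ) ≤ (θ (n + 1) - θ n) / θ n := by
  have hn' : (0 : ℝ) < n := by exact_mod_cast hn
  rw [θ_succ_sub_θ, div_le_div_iff₀ hn' (θ_pos hn), one_mul, mul_comm]
  exact θ_le_mul_log_p_succ n

theorem stmt10 : ∀ n : ℕ, 1 ≤ n → (θ (n+1) - θ n) / θ n > (9/10) / (n : ℝ) := by
  intro n hn
  have hn' : (0 : ℝ) < n := by exact_mod_cast hn
  calc (9 / 10) / (n : ℝ) < 1 / n := div_lt_div_of_pos_right (by norm_num) hn'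
    _ ≤ (θ (n + 1) - θ n) / θ n := inv_le_θ_succ_sub_θ_div_θ hn
end

section
/- θ-analogue of the Legendre conjecture: for every integer m ≥ 1 there exists n with m² < θ_n ≤ (m+1)², where θ_n = ∑_{i=1}^n ln(p_i). Equivalently, π_θ((m+1)²) > π_θ(m²), where π_θ(x) = #{i ≥ 1 : θ_i ≤ x}. -/
/-!
Write `a n = log p_{n+1}` and `c = log 2`. Bertrand's postulate gives `a (n + 1) ≤ a n + c`,
and `c ≤ a n`, so `a (n + 1) ^ 2 ≤ a n ^ 2 + 3 c a n`; summing,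
`(log p_{n+1}) ^ 2 ≤ c ^ 2 + 3 c θ_n`.
Hence as long as `θ_n ≤ m ^ 2` the next term `log p_{n+1}` is at most `2 m + 1`, so the sequence
`θ_n`, which tends to infinity, cannot jump over the interval `(m ^ 2, (m + 1) ^ 2]`.
-/

open Finset Real

lemma sq_le_sq_add_three_mul_sum {a : ℕ → ℝ} {c : ℝ} (hc : 0 ≤ c) (ha : ∀ i, c ≤ a i)
    (hstep : ∀ i, a (i + 1) ≤ a i + c) (n : ℕ) :
    a n ^ 2 ≤ a 0 ^ 2 + 3 * c * ∑ i ∈ range n, a i := by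
  induction n with
  | zero => simp
  | succ n ih =>
    have hsq : a (n + 1) ^ 2 ≤ (a n + c) ^ 2 := pow_le_pow_left₀ (hc.trans (ha _)) (hstep n) 2
    rw [sum_range_succ]
    nlinarith [ha n]

lemma Nat.nth_prime_succ_le_two_mul (n : ℕ) :
    Nat.nth Nat.Prime (n + 1) ≤ 2 * Nat.nth Nat.Prime n := by
  obtain ⟨q, hq, hlt, hle⟩ :=
    Nat.exists_prime_lt_and_le_two_mul (Nat.nth Nat.Prime n) (Nat.prime_nth_prime n).ne_zero
  by_contra! h
  exact (Nat.le_nth_of_lt_nth_succ (hle.trans_lt h) hq).not_gt hlt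

lemma log_two_le_log_nth_prime (n : ℕ) : log 2 ≤ log (Nat.nth Nat.Prime n) :=
  log_le_log two_pos (mod_cast (Nat.prime_nth_prime n).two_le)

lemma log_nth_prime_succ_le (n : ℕ) :
    log (Nat.nth Nat.Prime (n + 1)) ≤ log (Nat.nth Nat.Prime n) + log 2 := by
  have hpos : (0 : ℝ) < Nat.nth Nat.Prime (n + 1) := mod_cast (Nat.prime_nth_prime _).pos
  rw [← log_mul (mod_cast (Nat.prime_nth_prime n).ne_zero) two_ne_zero]
  exact log_le_log hpos (by rw [mul_comm]; exact_mod_cast Nat.nth_prime_succ_le_two_mul n)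

lemma θ_eq_sum_range (n : ℕ) : θ n = ∑ i ∈ range n, log (Nat.nth Nat.Prime i) := by
  rw [θ, ← Ico_add_one_right_eq_Icc, sum_Ico_eq_sum_range]
  simp [p]

lemma θ_succ (n : ℕ) : θ (n + 1) = θ n + log (Nat.nth Nat.Prime n) := by
  rw [θ_eq_sum_range, θ_eq_sum_range, sum_range_succ]

lemma log_nth_prime_sq_le (n : ℕ) :
    log (Nat.nth Nat.Prime n) ^ 2 ≤ log 2 ^ 2 + 3 * log 2 * θ n := by
  simpa [θ_eq_sum_range] using sq_le_sq_add_three_mul_sum (log_nonneg one_le_two)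
    log_two_le_log_nth_prime log_nth_prime_succ_le n

lemma log_nth_prime_le_of_θ_le {n : ℕ} {m : ℝ} (hm : 0 ≤ m) (hθ : θ n ≤ m ^ 2) :
    log (Nat.nth Nat.Prime n) ≤ 2 * m + 1 := by
  have hc : log 2 < 1 := log_two_lt_d9.trans (by norm_num)
  have hc0 : 0 ≤ log 2 := log_nonneg one_le_two
  have hsq : log (Nat.nth Nat.Prime n) ^ 2 ≤ (2 * m + 1) ^ 2 := by
    nlinarith [log_nth_prime_sq_le n, mul_le_mul_of_nonneg_left hθ hc0]
  exact le_of_sq_le_sq hsq (by positivity)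

lemma exists_lt_θ (x : ℝ) : ∃ n, x < θ n := by
  have hc : 0 < log 2 := log_pos one_lt_two
  obtain ⟨n, hn⟩ := exists_nat_gt (x / log 2)
  refine ⟨n, (div_lt_iff₀ hc).1 hn |>.trans_le ?_⟩
  simpa [θ_eq_sum_range] using sum_le_sum fun i (_ : i ∈ range n) ↦ log_two_le_log_nth_prime i

theorem stmt16 : ∀ m : ℕ, 1 ≤ m → ∃ n : ℕ, 1 ≤ n ∧ (m : ℝ)^2 < θ n ∧ θ n ≤ ((m : ℝ) + 1)^2 := by
  intro m _
  have hex := exists_lt_θ ((m : ℝ) ^ 2)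
  obtain ⟨N, hN⟩ : ∃ N, Nat.find hex = N + 1 := by
    refine Nat.exists_eq_succ_of_ne_zero fun h ↦ ?_
    have h0 := Nat.find_spec hex
    rw [h, θ_eq_sum_range, sum_range_zero] at h0
    exact h0.not_ge (sq_nonneg _)
  have hθN : θ N ≤ (m : ℝ) ^ 2 := not_lt.1 (Nat.find_min hex (by omega))
  refine ⟨N + 1, N.succ_pos, hN ▸ Nat.find_spec hex, ?_⟩
  rw [θ_succ]
  linarith [log_nth_prime_le_of_θ_le (Nat.cast_nonneg m) hθN]
end
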